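/- Let M be a matroid of rank k on Y = {y_1,…,y_m} with a representing matrix M ∈ F_2^{k×m} (rank(M_S) = r_M(S) for all S ⊆ Y). Write χ = (y_1,…,y_m, x_1,…,x_k) ∈ F_2^{m+k} and ξ = (x_1,…,x_k). Then the linear map f(χ) = (f_1(χ),…,f_m(χ)) with f_i(χ) = y_i + ξ·M_i (M_i the i-th column of M) is a perfect scalar linear index code of length m over F_2 for the generalized index coding problem I_M: (i) for every basis B = {y_{i_1},…,y_{i_k}} of M and every j, x_j is a function of ((y_i)_{i∈B}, f(χ)); (ii) for every circuit C = {y_{i_1},…,y_{i_c}} of M and every y ∈ C, y is a function of (Σ_{y_j∈C\{y}} y_j, f(χ)); (iii) every y_i is a function of (ξ, f(χ)). -/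
import Mathlib


/-- A matroid on the ground set `{1, …, m}`, given by its independence axioms. -/
structure FinMatroid (m : ℕ) where
  Indep : Finset (Fin m) → Prop
  empty_indep : Indep ∅
  subset_indep : ∀ ⦃I J : Finset (Fin m)⦄, Indep J → I ⊆ J → Indep I
  exchange : ∀ ⦃I J : Finset (Fin m)⦄, Indep I → Indep J → I.card < J.card →
    ∃ e ∈ J, e ∉ I ∧ Indep (insert e I)

/-- The rank of a subset: the maximum cardinality of an independent subset. -/
noncomputable def FinMatroid.rank {m : ℕ} (M : FinMatroid m) (S : Finset (Fin m)) : ℕ :=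
  letI : DecidablePred M.Indep := Classical.decPred _
  (S.powerset.filter M.Indep).sup Finset.card

/-- A basis: a maximal independent set. -/
def FinMatroid.IsBasis {m : ℕ} (M : FinMatroid m) (B : Finset (Fin m)) : Prop :=
  M.Indep B ∧ ∀ I : Finset (Fin m), M.Indep I → B ⊆ I → I = B

/-- A circuit: a minimal dependent set. -/
def FinMatroid.IsCircuit {m : ℕ} (M : FinMatroid m) (C : Finset (Fin m)) : Prop :=
  ¬ M.Indep C ∧ ∀ D : Finset (Fin m), D ⊂ C → M.Indep D


namespace FinMatroid
variable {m : ℕ} (M : FinMatroid m)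

lemma card_le_rank {T S : Finset (Fin m)} (hT : M.Indep T) (hTS : T ⊆ S) :
    T.card ≤ M.rank S := by
  unfold FinMatroid.rank
  letI : DecidablePred M.Indep := Classical.decPred _
  exact Finset.le_sup (Finset.mem_filter.2 ⟨Finset.mem_powerset.2 hTS, hT⟩)

lemma rank_le {S : Finset (Fin m)} {n : ℕ}
    (h : ∀ T : Finset (Fin m), T ⊆ S → M.Indep T → T.card ≤ n) : M.rank S ≤ n := by
  unfold FinMatroid.rank
  letI : DecidablePred M.Indep := Classical.decPred _
  exact Finset.sup_le fun T hT =>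
    h T (Finset.mem_powerset.1 (Finset.mem_filter.1 hT).1) (Finset.mem_filter.1 hT).2

lemma rank_eq_card_of_indep {S : Finset (Fin m)} (h : M.Indep S) : M.rank S = S.card :=
  le_antisymm (M.rank_le fun T hTS _ => Finset.card_le_card hTS)
    (M.card_le_rank h (subset_refl S))

lemma exists_indep_card_rank (S : Finset (Fin m)) :
    ∃ I : Finset (Fin m), I ⊆ S ∧ M.Indep I ∧ I.card = M.rank S := by
  classical
  unfold FinMatroid.rank
  have hne : ((S.powerset.filter (letI : DecidablePred M.Indep := Classical.decPred _; M.Indep))).Nonempty :=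
    ⟨∅, Finset.mem_filter.2 ⟨Finset.mem_powerset.2 (Finset.empty_subset S), M.empty_indep⟩⟩
  obtain ⟨b, hb, hsup⟩ := Finset.exists_mem_eq_sup _ hne Finset.card
  exact ⟨b, Finset.mem_powerset.1 (Finset.mem_filter.1 hb).1, (Finset.mem_filter.1 hb).2, hsup.symm⟩

lemma IsBasis.card_eq {B : Finset (Fin m)} (hB : M.IsBasis B) :
    B.card = M.rank Finset.univ := by
  obtain ⟨I, _, hI, hIcard⟩ := M.exists_indep_card_rank Finset.univ
  have hle : B.card ≤ M.rank Finset.univ := M.card_le_rank hB.1 (Finset.subset_univ B)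
  rcases lt_or_eq_of_le hle with hlt | heq
  · rw [← hIcard] at hlt
    obtain ⟨e, _, heB, hins⟩ := M.exchange hB.1 hI hlt
    have := hB.2 (insert e B) hins (Finset.subset_insert e B)
    exact absurd (this ▸ Finset.mem_insert_self e B) heB
  · exact heq

lemma IsCircuit.nonempty {C : Finset (Fin m)} (hC : M.IsCircuit C) : C.Nonempty := by
  rcases C.eq_empty_or_nonempty with rfl | h
  · exact absurd M.empty_indep hC.1
  · exact h

lemma IsCircuit.rank_erase {C : Finset (Fin m)} (hC : M.IsCircuit C) {a : Fin m} (ha : a ∈ C) :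
    M.rank (C.erase a) = C.card - 1 := by
  rw [M.rank_eq_card_of_indep (hC.2 _ (Finset.erase_ssubset ha)), Finset.card_erase_of_mem ha]

lemma IsCircuit.rank_self {C : Finset (Fin m)} (hC : M.IsCircuit C) :
    M.rank C = C.card - 1 := by
  obtain ⟨a, ha⟩ := hC.nonempty (M := M)
  refine le_antisymm (M.rank_le fun T hTS hT => ?_) ?_
  · have hTne : T ≠ C := fun h => hC.1 (h ▸ hT)
    have := Finset.card_lt_card (Finset.ssubset_iff_subset_ne.2 ⟨hTS, hTne⟩)
    omega
  · have := M.card_le_rank (hC.2 _ (Finset.erase_ssubset ha)) (Finset.erase_subset a C)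
    rwa [Finset.card_erase_of_mem ha] at this

end FinMatroid

lemma inj_of_rank_eq_card {n : Type*} {r : Type*} [Fintype n] [Fintype r] [Finite r]
    (B : Matrix r n (ZMod 2)) (h : B.rank = Fintype.card n) :
    Function.Injective B.mulVec := by
  have hinj : Function.Injective B.mulVecLin := by
    rw [← LinearMap.ker_eq_bot]
    have h2 := B.mulVecLin.finrank_range_add_finrank_ker
    rw [← Submodule.finrank_eq_zero (R := ZMod 2)]
    have h3 : Module.finrank (ZMod 2) (n → ZMod 2) = Fintype.card n :=
      Module.finrank_fintype_fun_eq_card _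
    unfold Matrix.rank at h
    omega
  intro x y hxy
  exact hinj (by simpa [Matrix.mulVecLin_apply] using hxy)

/-- If `A ∈ F₂^{k×m}` represents the matroid `M` of rank `k`
(`rank (A_S) = r_M (S)` for all `S`), then `f (y, ξ) = (y_i + ξ·A_i)_{i=1}^m` is a
perfect scalar linear index code of length `m` for `I_M`: (i) every basis receiver
`(x_j, B)`, (ii) every circuit receiver `(y, Σ_{j ∈ C\{y}} y_j)` and (iii) every
receiver `(y_i, {x_1, …, x_k})` can decode its demand from its side information
together with `f`. -/
theorem stmt_3 (m k : ℕ) (M : FinMatroid m) (hrank : M.rank Finset.univ = k)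
    (A : Matrix (Fin k) (Fin m) (ZMod 2))
    (hrep : ∀ S : Finset (Fin m),
      (A.submatrix id (fun i : {i // i ∈ S} => (i : Fin m))).rank = M.rank S) :
    (∀ B : Finset (Fin m), M.IsBasis B → ∀ j : Fin k,
      ∃ ψ : ({i // i ∈ B} → ZMod 2) → (Fin m → ZMod 2) → ZMod 2,
        ∀ (y : Fin m → ZMod 2) (ξ : Fin k → ZMod 2),
          ψ (fun i => y i) (y + Matrix.vecMul ξ A) = ξ j) ∧
    (∀ C : Finset (Fin m), M.IsCircuit C → ∀ a ∈ C,
      ∃ ψ : ZMod 2 → (Fin m → ZMod 2) → ZMod 2,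
        ∀ (y : Fin m → ZMod 2) (ξ : Fin k → ZMod 2),
          ψ (∑ i ∈ C.erase a, y i) (y + Matrix.vecMul ξ A) = y a) ∧
    (∀ i : Fin m, ∃ ψ : (Fin k → ZMod 2) → (Fin m → ZMod 2) → ZMod 2,
        ∀ (y : Fin m → ZMod 2) (ξ : Fin k → ZMod 2),
          ψ ξ (y + Matrix.vecMul ξ A) = y i) := by
  refine ⟨?_, ?_, ?_⟩
  · -- (i) basis receivers
    intro B hB j
    set AB := A.submatrix id (fun i : {i // i ∈ B} => (i : Fin m)) with hABdef
    have hcardB : B.card = k := by rw [hB.card_eq (M := M), hrank]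
    have hrankB : (AB.transpose).rank = Fintype.card (Fin k) := by
      rw [Matrix.rank_transpose, hrep B, M.rank_eq_card_of_indep hB.1, hcardB, Fintype.card_fin]
    have hinj : Function.Injective (AB.transpose.mulVec) := inj_of_rank_eq_card _ hrankB
    refine ⟨fun yB f => Function.invFun (AB.transpose.mulVec) (fun i => f (i : Fin m) - yB i) j, ?_⟩
    intro y ξ
    have key : (fun i : {i // i ∈ B} => (y + Matrix.vecMul ξ A) (i : Fin m) - y i)
        = AB.transpose.mulVec ξ := by
      funext i
      simp only [Pi.add_apply, add_sub_cancel_left, Matrix.mulVec, dotProduct,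
        Matrix.transpose_apply, Matrix.vecMul, hABdef, Matrix.submatrix_apply, id_eq]
      exact Finset.sum_congr rfl fun x _ => mul_comm _ _
    show Function.invFun AB.transpose.mulVec
      (fun i : {i // i ∈ B} => (y + Matrix.vecMul ξ A) (i : Fin m) - y i) j = ξ j
    rw [key, Function.leftInverse_invFun hinj ξ]
  · -- (ii) circuit receivers
    intro C hC a ha
    -- Step 1: the columns of A indexed by C sum to zero.
    have hsum : ∀ j : Fin k, ∑ i ∈ C, A j i = 0 := by
      set AC := A.submatrix id (fun i : {i // i ∈ C} => (i : Fin m)) with hACdef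
      have hCcard : 1 ≤ C.card := Finset.card_pos.2 (hC.nonempty (M := M))
      have hrankC : AC.rank = C.card - 1 := by rw [hrep C, hC.rank_self (M := M)]
      -- the kernel of AC is nontrivial
      have h2 := AC.mulVecLin.finrank_range_add_finrank_ker
      rw [Module.finrank_fintype_fun_eq_card, Fintype.card_coe] at h2
      have hker : LinearMap.ker AC.mulVecLin ≠ ⊥ := by
        intro hbot
        rw [hbot, finrank_bot] at h2
        unfold Matrix.rank at hrankC
        omega
      obtain ⟨c, hc, hc0⟩ := Submodule.exists_mem_ne_zero_of_ne_bot hker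
      have hcmul : AC.mulVec c = 0 := by
        simpa [Matrix.mulVecLin_apply] using (LinearMap.mem_ker.1 hc)
      -- extend c to Fin m by zero
      set d : Fin m → ZMod 2 := fun i => if h : i ∈ C then c ⟨i, h⟩ else 0 with hd
      have hmulC : ∀ j : Fin k, ∑ i ∈ C, A j i * d i = 0 := by
        intro j
        have := congrFun hcmul j
        simp only [Matrix.mulVec, dotProduct, Pi.zero_apply] at this
        rw [← this, ← Finset.sum_coe_sort C (fun i => A j i * d i)]
        refine Finset.sum_congr rfl fun i _ => ?_
        simp [hd, i.2, hACdef, mul_comm]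
      -- every coordinate of c equals 1
      have hall : ∀ i : {i // i ∈ C}, c i = 1 := by
        by_contra hcon
        push_neg at hcon
        obtain ⟨b, hb⟩ := hcon
        have hcb : c b = 0 := by
          have h01 : ∀ x : ZMod 2, x ≠ 1 → x = 0 := by decide
          exact h01 _ hb
        set E := C.erase (b : Fin m) with hE
        set AE := A.submatrix id (fun i : {i // i ∈ E} => (i : Fin m)) with hAEdef
        have hrankE : AE.rank = Fintype.card {i // i ∈ E} := by
          rw [hrep E, hE, hC.rank_erase (M := M) b.2, Fintype.card_coe,
            Finset.card_erase_of_mem b.2]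
        have hinjE : Function.Injective (AE.mulVec) := inj_of_rank_eq_card _ hrankE
        set c' : {i // i ∈ E} → ZMod 2 := fun i => d (i : Fin m) with hc'
        have hmulE : AE.mulVec c' = 0 := by
          funext j
          rw [Matrix.mulVec, dotProduct]
          have : ∑ i : {i // i ∈ E}, AE j i * c' i = ∑ i ∈ E, A j i * d i := by
            rw [← Finset.sum_coe_sort E (fun i => A j i * d i)]
            exact Finset.sum_congr rfl fun i _ => by simp [hAEdef, hc']
          rw [this]
          have hdb : d (b : Fin m) = 0 := by simp [hd, b.2, hcb]
          have := hmulC j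
          rw [← Finset.add_sum_erase C _ b.2, hdb, mul_zero, zero_add] at this
          simpa [hE] using this
        have hc'0 : c' = 0 := hinjE (by simpa using hmulE)
        apply hc0
        funext i
        by_cases hib : (i : Fin m) = (b : Fin m)
        · have : i = b := Subtype.ext hib
          simp [this, hcb]
        · have hiE : (i : Fin m) ∈ E := Finset.mem_erase.2 ⟨hib, i.2⟩
          have := congrFun hc'0 ⟨i, hiE⟩
          simpa [hc', hd, i.2] using this
      intro j
      have := hmulC j
      rw [← this]
      refine Finset.sum_congr rfl fun i hi => ?_
      simp [hd, hi, hall ⟨i, hi⟩]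
    -- Step 2: decode
    refine ⟨fun s f => s + ∑ i ∈ C, f i, ?_⟩
    intro y ξ
    have h1 : ∑ i ∈ C, (y + Matrix.vecMul ξ A) i = ∑ i ∈ C, y i := by
      have : ∑ i ∈ C, Matrix.vecMul ξ A i = 0 := by
        simp only [Matrix.vecMul, dotProduct]
        rw [Finset.sum_comm]
        simp [← Finset.mul_sum, hsum]
      simp [Finset.sum_add_distrib, this]
    show (∑ i ∈ C.erase a, y i) + ∑ i ∈ C, (y + Matrix.vecMul ξ A) i = y a
    have two : ∀ x : ZMod 2, x + x = 0 := by decide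
    rw [h1, ← Finset.add_sum_erase C y ha, add_comm (y a) (∑ i ∈ C.erase a, y i),
      ← add_assoc, two, zero_add]
  · -- (iii)
    intro i
    exact ⟨fun ξ f => f i - Matrix.vecMul ξ A i, fun y ξ => by simp⟩
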